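/- Let i ≥ 2 be an integer and let h₁, …, h_i be integers with |h_j| ≤ j for every j. Assume that if h_j ≠ h_i for all j < i, then either h_j < h_i for all j < i or h_j > h_i for all j < i. For 1 ≤ j < i define the attention score s_j = φ(h_i, 1) · φ(h_j, 1) − z(f(j)), where z(x) = x/√(2x² + 2) and f is the tie-breaking function. Let M = {j : 1 ≤ j < i, s_j = max_{1 ≤ j' < i} s_{j'}} and let φ̄ = (1/|M|) Σ_{j ∈ M} φ(h_j, 1) be the saturated-attention output. Then there exists j < i with h_j = h_i if and only if φ̄ = φ(h_i, 1). -/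

import Mathlib

open scoped RealInnerProductSpace

/-- Layer norm: subtract the mean, then normalize to unit Euclidean norm. -/
noncomputable def layerNorm {ι : Type*} [Fintype ι] (v : EuclideanSpace ℝ ι) :
    EuclideanSpace ℝ ι :=
  let c : EuclideanSpace ℝ ι := WithLp.toLp 2 (fun j => v j - (∑ l, v l) / (Fintype.card ι))
  ‖c‖⁻¹ • c

/-- The layer-norm hash φ(x, y) = layer_norm(⟨x, y, −x, −y⟩) ∈ ℝ⁴. -/
noncomputable def lnHash (x y : ℝ) : EuclideanSpace ℝ (Fin 4) :=
  layerNorm (WithLp.toLp 2 ![x, y, -x, -y] : EuclideanSpace ℝ (Fin 4))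

/-- Two-argument tie-breaking recursion: f(i, 0) = 1/i, f(i, k+1) = f(i−1, k) − f(i, k). -/
noncomputable def fTie : ℕ → ℝ → ℝ
  | 0, i => 1 / i
  | (k + 1), i => fTie k (i - 1) - fTie k i

/-- The tie-breaking function f on integers i ≥ 1, with ε = 10⁻¹⁰. -/
noncomputable def tieBreak (i : ℤ) : ℝ :=
  if i ≤ 4 then 1 / 1000 - (10 : ℝ)⁻¹ ^ 10 * (i : ℝ) else fTie 3 (i : ℝ) / 100

/-- z(x) = x/√(2x² + 2), the first coordinate of φ(x, 1). -/
noncomputable def zfn (x : ℝ) : ℝ := x / Real.sqrt (2 * x ^ 2 + 2)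

/-! The hash `φ(x, 1)` is the unit vector `(x, 1, -x, -1) / √(2x² + 2)`, so for integers `a ≠ b`
the inner product `⟪φ(a, 1), φ(b, 1)⟫` falls short of `1` by at least
`1 / (2 (a² + 1) ((|a| + 1)² + 1))`. The tie-breaking penalty `z(f(j))` is positive, strictly
decreasing in `j`, and below that gap as soon as `|a| ≤ j`. So if `h_i` occurs before position `i`,
its rightmost occurrence `j₀` (where `|h_i| = |h_{j₀}| ≤ j₀`) is the unique maximiser of the score
and attention returns `φ(h_i, 1)`; otherwise every maximiser has inner product `< 1` with the unit
vector `φ(h_i, 1)`, hence so does their average. -/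

lemma layerNorm_of_sum_eq_zero {ι : Type*} [Fintype ι] {v : EuclideanSpace ℝ ι}
    (hv : ∑ l, v l = 0) : layerNorm v = ‖v‖⁻¹ • v := by
  simp [layerNorm, hv]

lemma lnHash_one_eq (x : ℝ) : lnHash x 1 =
    (√(2 * x ^ 2 + 2))⁻¹ • (WithLp.toLp 2 ![x, 1, -x, -1] : EuclideanSpace ℝ (Fin 4)) := by
  have hnorm : ‖(WithLp.toLp 2 ![x, 1, -x, -1] : EuclideanSpace ℝ (Fin 4))‖ = √(2 * x ^ 2 + 2) := by
    rw [EuclideanSpace.norm_eq, Fin.sum_univ_four]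
    congr 1
    simp
    ring
  rw [lnHash, layerNorm_of_sum_eq_zero (by simp [Fin.sum_univ_four]), hnorm]

lemma norm_lnHash_one (x : ℝ) : ‖lnHash x 1‖ = 1 := by
  rw [lnHash, layerNorm_of_sum_eq_zero (by simp [Fin.sum_univ_four])]
  refine norm_smul_inv_norm fun h0 => ?_
  simpa using congrArg (· 1) h0

lemma inner_lnHash_one_self (x : ℝ) : ⟪lnHash x 1, lnHash x 1⟫ = 1 := by
  rw [real_inner_self_eq_norm_sq, norm_lnHash_one, one_pow]

lemma inner_lnHash_one (x y : ℝ) :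
    ⟪lnHash x 1, lnHash y 1⟫ = (2 * x * y + 2) / (√(2 * x ^ 2 + 2) * √(2 * y ^ 2 + 2)) := by
  rw [lnHash_one_eq, lnHash_one_eq, real_inner_smul_left, real_inner_smul_right,
    PiLp.inner_apply, Fin.sum_univ_four]
  simp
  field_simp
  ring

lemma sq_add_one_le_of_one_le_abs_sub {x y : ℝ} (hxy : 1 ≤ |x - y|) :
    y ^ 2 + 1 ≤ (x - y) ^ 2 * ((|x| + 1) ^ 2 + 1) := by
  have hy : |y| ≤ |x - y| * (|x| + 1) := by
    nlinarith [abs_sub_abs_le_abs_sub y x, abs_sub_comm x y, abs_nonneg x]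
  have hsq : y ^ 2 ≤ (x - y) ^ 2 * (|x| + 1) ^ 2 := by
    rw [← sq_abs y, ← sq_abs (x - y), ← mul_pow]
    exact pow_le_pow_left₀ (abs_nonneg y) hy 2
  nlinarith [one_le_sq_iff_one_le_abs (x - y) |>.2 hxy]

lemma sq_sub_div_le_one_sub_inner_lnHash_one (x y : ℝ) :
    (x - y) ^ 2 / (2 * (x ^ 2 + 1) * (y ^ 2 + 1)) ≤ 1 - ⟪lnHash x 1, lnHash y 1⟫ := by
  rw [inner_lnHash_one]
  set c := 2 * x * y + 2
  set D := √(2 * x ^ 2 + 2) * √(2 * y ^ 2 + 2)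
  have hD : 0 < D := by positivity
  have hD2 : D ^ 2 = 4 * (x ^ 2 + 1) * (y ^ 2 + 1) := by
    rw [mul_pow, Real.sq_sqrt (by positivity), Real.sq_sqrt (by positivity)]
    ring
  have hdiff : D ^ 2 - c ^ 2 = 4 * (x - y) ^ 2 := by rw [hD2]; ring
  have hcD : c ≤ D := by nlinarith [sq_nonneg (x - y)]
  -- `D (D - c) - (D² - c²) / 2 = (D - c)² / 2`
  have key : 2 * (x - y) ^ 2 ≤ D * (D - c) := by nlinarith [sq_nonneg (D - c)]
  rw [one_sub_div hD.ne', div_le_div_iff₀ (by positivity) hD]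
  nlinarith

noncomputable def lnHashGap (t : ℝ) : ℝ := 1 / (2 * (t ^ 2 + 1) * ((t + 1) ^ 2 + 1))

lemma lnHashGap_antitoneOn : AntitoneOn lnHashGap (Set.Ici 0) := by
  intro s (hs : 0 ≤ s) t _ hst
  unfold lnHashGap
  gcongr

lemma inner_lnHash_one_le_one_sub_lnHashGap {x y : ℝ} (hxy : 1 ≤ |x - y|) :
    ⟪lnHash x 1, lnHash y 1⟫ ≤ 1 - lnHashGap |x| := by
  have hgap : lnHashGap |x| ≤ (x - y) ^ 2 / (2 * (x ^ 2 + 1) * (y ^ 2 + 1)) := by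
    rw [lnHashGap, sq_abs, div_le_div_iff₀ (by positivity) (by positivity)]
    nlinarith [sq_add_one_le_of_one_le_abs_sub hxy, sq_nonneg x]
  linarith [sq_sub_div_le_one_sub_inner_lnHash_one x y]

lemma zfn_le_self {x : ℝ} (hx : 0 ≤ x) : zfn x ≤ x := by
  refine div_le_self hx (Real.one_le_sqrt.2 ?_)
  nlinarith [sq_nonneg x]

lemma zfn_pos {x : ℝ} (hx : 0 < x) : 0 < zfn x := div_pos hx (by positivity)

lemma zfn_strictMonoOn : StrictMonoOn zfn (Set.Ici 0) := by
  intro x (hx : 0 ≤ x) y (hy : 0 ≤ y) hxy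
  have hx' : x * √(2 * y ^ 2 + 2) = √(x ^ 2 * (2 * y ^ 2 + 2)) := by
    rw [Real.sqrt_mul (sq_nonneg x), Real.sqrt_sq hx]
  have hy' : y * √(2 * x ^ 2 + 2) = √(y ^ 2 * (2 * x ^ 2 + 2)) := by
    rw [Real.sqrt_mul (sq_nonneg y), Real.sqrt_sq hy]
  rw [zfn, zfn, div_lt_div_iff₀ (by positivity) (by positivity), hx', hy']
  exact Real.sqrt_lt_sqrt (by positivity) (by nlinarith)

lemma fTie_three {x : ℝ} (hx : 3 < x) : fTie 3 x = 6 / (x * (x - 1) * (x - 2) * (x - 3)) := by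
  have h0 : x ≠ 0 := by linarith
  have h1 : x - 1 ≠ 0 := by linarith
  have h2 : x - 1 - 1 ≠ 0 := by linarith
  have h3 : x - 1 - 1 - 1 ≠ 0 := by linarith
  have h2' : x - 2 ≠ 0 := by linarith
  have h3' : x - 3 ≠ 0 := by linarith
  simp only [fTie]
  field_simp
  ring

lemma tieBreak_of_le_four {j : ℤ} (hj : j ≤ 4) :
    tieBreak j = 1 / 1000 - (10 : ℝ)⁻¹ ^ 10 * j := if_pos hj

lemma tieBreak_of_five_le {j : ℤ} (hj : 5 ≤ j) :
    tieBreak j = 6 / (j * (j - 1) * (j - 2) * (j - 3)) / 100 := by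
  have hj' : (5 : ℝ) ≤ j := by exact_mod_cast hj
  rw [tieBreak, if_neg (by omega), fTie_three (by linarith)]

lemma falling_four_pos {x : ℝ} (hx : 3 < x) : 0 < x * (x - 1) * (x - 2) * (x - 3) := by
  apply_rules [mul_pos] <;> linarith

lemma falling_four_lt {x y : ℝ} (hx : 3 ≤ x) (hxy : x < y) :
    x * (x - 1) * (x - 2) * (x - 3) < y * (y - 1) * (y - 2) * (y - 3) := by
  gcongr <;> first | linarith | (apply_rules [mul_nonneg] <;> linarith)

lemma tieBreak_pos (j : ℤ) : 0 < tieBreak j := by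
  rcases le_or_gt j 4 with h4 | h5
  · have : (j : ℝ) ≤ 4 := by exact_mod_cast h4
    rw [tieBreak_of_le_four h4]
    norm_num
    linarith
  · have : (5 : ℝ) ≤ j := by exact_mod_cast h5
    rw [tieBreak_of_five_le h5]
    have := falling_four_pos (x := j) (by linarith)
    positivity

lemma tieBreak_strictAnti : StrictAnti tieBreak := by
  intro j k hjk
  have hjk' : (j : ℝ) < k := by exact_mod_cast hjk
  rcases le_or_gt k 4 with hk4 | hk5
  · rw [tieBreak_of_le_four hk4, tieBreak_of_le_four (by omega)]
    have : (0 : ℝ) < (10 : ℝ)⁻¹ ^ 10 := by positivity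
    nlinarith
  have hk5' : (5 : ℝ) ≤ k := by exact_mod_cast hk5
  have hk_pos := falling_four_pos (x := k) (by linarith)
  rw [tieBreak_of_five_le hk5]
  rcases le_or_gt j 4 with hj4 | hj5
  · have hj4' : (j : ℝ) ≤ 4 := by exact_mod_cast hj4
    have h120 : 6 / (k * (k - 1) * (k - 2) * (k - 3)) / 100 ≤ (6 : ℝ) / 120 / 100 := by
      gcongr
      have h1 : (0 : ℝ) ≤ k - 5 := by linarith
      nlinarith [mul_nonneg (mul_nonneg h1 h1) h1, mul_nonneg h1 h1]
    rw [tieBreak_of_le_four hj4]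
    norm_num at h120 ⊢
    linarith
  · have hj5' : (5 : ℝ) ≤ j := by exact_mod_cast hj5
    rw [tieBreak_of_five_le hj5]
    exact div_lt_div_of_pos_right (div_lt_div_of_pos_left (by norm_num)
      (falling_four_pos (by linarith)) (falling_four_lt (by linarith) hjk')) (by norm_num)

lemma tieBreak_lt_lnHashGap {m : ℤ} (hm : 1 ≤ m) : tieBreak m < lnHashGap m := by
  rcases le_or_gt m 4 with h4 | h5
  · interval_cases m <;> norm_num [tieBreak_of_le_four, lnHashGap]
  have hm5 : (5 : ℝ) ≤ m := by exact_mod_cast h5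
  rw [tieBreak_of_five_le h5, lnHashGap, div_div, div_lt_div_iff₀
    (by nlinarith [falling_four_pos (x := m) (by linarith)]) (by positivity)]
  have u : (0 : ℝ) ≤ m - 5 := by linarith
  nlinarith [pow_nonneg u 2, pow_nonneg u 3, pow_nonneg u 4]

lemma one_le_abs_intCast_sub {a b : ℤ} (hab : a ≠ b) : 1 ≤ |(a : ℝ) - b| := by
  exact_mod_cast Int.one_le_abs (sub_ne_zero.2 hab)

lemma inner_lnHash_one_intCast_lt_one {a b : ℤ} (hab : a ≠ b) :
    ⟪lnHash (a : ℝ) 1, lnHash (b : ℝ) 1⟫ < 1 := by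
  have : 0 < lnHashGap |(a : ℝ)| := by unfold lnHashGap; positivity
  linarith [inner_lnHash_one_le_one_sub_lnHashGap (one_le_abs_intCast_sub hab)]

noncomputable def attnScore (a b j : ℤ) : ℝ :=
  ⟪lnHash (a : ℝ) 1, lnHash (b : ℝ) 1⟫ - zfn (tieBreak j)

lemma attnScore_self_lt_self (a : ℤ) {j k : ℤ} (hjk : j < k) :
    attnScore a a j < attnScore a a k := by
  have := zfn_strictMonoOn (tieBreak_pos k).le (tieBreak_pos j).le (tieBreak_strictAnti hjk)
  simp only [attnScore, inner_lnHash_one_self]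
  linarith

lemma attnScore_lt_attnScore_self {a b : ℤ} (hab : a ≠ b) (j : ℤ) {k : ℤ} (hk : 1 ≤ k)
    (hak : |a| ≤ k) : attnScore a b j < attnScore a a k := by
  have hak' : |(a : ℝ)| ≤ k := by exact_mod_cast hak
  have hinner := inner_lnHash_one_le_one_sub_lnHashGap (one_le_abs_intCast_sub hab)
  have hgap := lnHashGap_antitoneOn (Set.mem_Ici.2 (abs_nonneg _))
    (Set.mem_Ici.2 ((abs_nonneg _).trans hak')) hak'
  have hpen := (zfn_le_self (tieBreak_pos k).le).trans_lt (tieBreak_lt_lnHashGap hk)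
  have hzj := zfn_pos (tieBreak_pos j)
  simp only [attnScore, inner_lnHash_one_self]
  linarith

lemma Finset.filter_forall_le_eq_singleton {ι α : Type*} [LinearOrder α] {J : Finset ι}
    {s : ι → α} {j₀ : ι} (hj₀ : j₀ ∈ J) (hlt : ∀ k ∈ J, k ≠ j₀ → s k < s j₀) :
    J.filter (fun j => ∀ j' ∈ J, s j' ≤ s j) = {j₀} := by
  ext k
  simp only [Finset.mem_filter, Finset.mem_singleton]
  constructor
  · rintro ⟨hk, hkmax⟩
    by_contra hne
    exact (hlt k hk hne).not_ge (hkmax j₀ hj₀)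
  · rintro rfl
    exact ⟨hj₀, fun j' hj' => (eq_or_ne j' k).elim (fun h => h ▸ le_rfl) fun h => (hlt j' hj' h).le⟩

lemma inv_card_smul_sum_ne_of_inner_lt {ι E : Type*} [NormedAddCommGroup E]
    [InnerProductSpace ℝ E] {u : E} (hu : u ≠ 0) {M : Finset ι} {v : ι → E}
    (hlt : ∀ j ∈ M, ⟪u, v j⟫ < ⟪u, u⟫) : (M.card : ℝ)⁻¹ • ∑ j ∈ M, v j ≠ u := by
  intro havg
  rcases M.eq_empty_or_nonempty with rfl | hM
  · simp [eq_comm, hu] at havg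
  have hsum : ∑ j ∈ M, ⟪u, v j⟫ < M.card * ⟪u, u⟫ := by
    simpa using Finset.sum_lt_sum_of_nonempty hM hlt
  have hcard : (0 : ℝ) < M.card := by exact_mod_cast hM.card_pos
  have := congrArg (⟪u, ·⟫) havg
  simp only [real_inner_smul_right, inner_sum] at this
  rw [inv_mul_eq_iff_eq_mul₀ hcard.ne'] at this
  linarith

theorem ranked_exact_match_iff_general (i : ℤ) (h : ℤ → ℤ)
    (hbound : ∀ j, 1 ≤ j → j ≤ i → |h j| ≤ j) :
    let s : ℤ → ℝ :=
      fun j => ⟪lnHash ((h i : ℤ) : ℝ) 1, lnHash ((h j : ℤ) : ℝ) 1⟫ - zfn (tieBreak j)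
    let J : Finset ℤ := Finset.Ico 1 i
    let M : Finset ℤ := J.filter fun j => ∀ j' ∈ J, s j' ≤ s j
    ((∃ j, 1 ≤ j ∧ j < i ∧ h j = h i) ↔
      (M.card : ℝ)⁻¹ • ∑ j ∈ M, lnHash ((h j : ℤ) : ℝ) 1 = lnHash ((h i : ℤ) : ℝ) 1) := by
  intro s J M
  constructor
  · rintro ⟨j, hj1, hji, hj⟩
    obtain ⟨j₀, hj₀, hrightmost⟩ := (J.filter (h · = h i)).exists_max_image id
      ⟨j, Finset.mem_filter.2 ⟨Finset.mem_Ico.2 ⟨hj1, hji⟩, hj⟩⟩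
    obtain ⟨hj₀J, hj₀i⟩ := Finset.mem_filter.1 hj₀
    obtain ⟨hj₀1, hj₀lt⟩ := Finset.mem_Ico.1 hj₀J
    have hM : M = {j₀} := by
      refine Finset.filter_forall_le_eq_singleton hj₀J fun k hkJ hk => ?_
      change attnScore (h i) (h k) k < attnScore (h i) (h j₀) j₀
      rw [hj₀i]
      by_cases hki : h k = h i
      · rw [hki]
        exact attnScore_self_lt_self _
          ((hrightmost k (Finset.mem_filter.2 ⟨hkJ, hki⟩)).lt_of_ne hk)
      · exact attnScore_lt_attnScore_self (Ne.symm hki) k hj₀1 (hj₀i ▸ hbound j₀ hj₀1 hj₀lt.le)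
    simp [hM, hj₀i]
  · intro havg
    by_contra hno
    refine inv_card_smul_sum_ne_of_inner_lt ?_ (fun k hk => ?_) havg
    · exact norm_ne_zero_iff.1 (by simp [norm_lnHash_one])
    obtain ⟨hk1, hki⟩ := Finset.mem_Ico.1 (Finset.mem_filter.1 hk).1
    rw [inner_lnHash_one_self]
    exact inner_lnHash_one_intCast_lt_one fun he => hno ⟨k, hk1, hki, he.symm⟩

/-- Rightmost retrieval via the layer-norm hash (Lemma "ranked-exact-match-iff"):
with scores s_j = φ(h_i,1)·φ(h_j,1) − z(f(j)), the saturated-attention output φ̄ over the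
maximizing positions equals φ(h_i,1) iff some j < i has h_j = h_i. -/
theorem ranked_exact_match_iff (i : ℤ) (hi : 2 ≤ i) (h : ℤ → ℤ)
    (hbound : ∀ j, 1 ≤ j → j ≤ i → |h j| ≤ j)
    (hside : (∀ j, 1 ≤ j → j < i → h j ≠ h i) →
      ((∀ j, 1 ≤ j → j < i → h j < h i) ∨ (∀ j, 1 ≤ j → j < i → h i < h j))) :
    let s : ℤ → ℝ :=
      fun j => ⟪lnHash ((h i : ℤ) : ℝ) 1, lnHash ((h j : ℤ) : ℝ) 1⟫ - zfn (tieBreak j)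
    let J : Finset ℤ := Finset.Ico 1 i
    let M : Finset ℤ := J.filter fun j => ∀ j' ∈ J, s j' ≤ s j
    ((∃ j, 1 ≤ j ∧ j < i ∧ h j = h i) ↔
      (M.card : ℝ)⁻¹ • ∑ j ∈ M, lnHash ((h j : ℤ) : ℝ) 1 = lnHash ((h i : ℤ) : ℝ) 1) :=
  ranked_exact_match_iff_general i h hbound
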